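/- arXiv:2202.00190 — 4 statements merged into one kernel-verified Lean document; each statement's English description precedes it below -/
import Mathlib

section
/- Let f : ℝ₊ⁿ → ℝ satisfy f(0) ≥ 0 and the diminishing-returns (DR-submodularity) property: for all x, y ∈ ℝ₊ⁿ with x ≤ y coordinatewise, every i ∈ {1,…,n} and every z ≥ 0, f(x + z·e_i) − f(x) ≥ f(y + z·e_i) − f(y). Then f is subadditive: f(x + y) ≤ f(x) + f(y) for all x, y ∈ ℝ₊ⁿ. -/
/-!
Diminishing returns along each coordinate direction add up: chaining the inequalities for the
coordinate increments `y i • e_i` one after another gives diminishing returns for the whole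
increment `y`. Comparing the base points `0 ≤ x` then gives `f (x + y) - f x ≤ f y - f 0 ≤ f y`.
-/

def HasDiminishingReturns {E : Type*} [AddCommGroup E] [PartialOrder E] (f : E → ℝ) (v : E) :
    Prop :=
  ∀ a b : E, 0 ≤ a → a ≤ b → f (b + v) - f b ≤ f (a + v) - f a

namespace HasDiminishingReturns

variable {E : Type*} [AddCommGroup E] [PartialOrder E] {f : E → ℝ}

theorem zero : HasDiminishingReturns f 0 := by
  intro a b _ _
  simp

theorem add [IsOrderedAddMonoid E] {u v : E} (hu₀ : 0 ≤ u) (hu : HasDiminishingReturns f u)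
    (hv : HasDiminishingReturns f v) : HasDiminishingReturns f (u + v) := by
  intro a b ha hab
  have hfirst := hu a b ha hab
  have hsecond := hv (a + u) (b + u) (add_nonneg ha hu₀) (by gcongr)
  rw [← add_assoc, ← add_assoc]
  linarith

end HasDiminishingReturns

theorem hasDiminishingReturns_of_nonneg {ι : Type*} [Fintype ι] [DecidableEq ι]
    {f : (ι → ℝ) → ℝ}
    (hDR : ∀ i : ι, ∀ z : ℝ, 0 ≤ z → HasDiminishingReturns f (Pi.single i z))
    {v : ι → ℝ} (hv : 0 ≤ v) : HasDiminishingReturns f v := by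
  rw [← Finset.univ_sum_single v]
  refine (Finset.sum_induction _ (fun w => 0 ≤ w ∧ HasDiminishingReturns f w)
    (fun u w hu hw => ⟨add_nonneg hu.1 hw.1, hu.2.add hu.1 hw.2⟩)
    ⟨le_rfl, HasDiminishingReturns.zero⟩
    (fun i _ => ⟨Pi.single_nonneg.2 (hv i), hDR i (v i) (hv i)⟩)).2

/-- A function on the nonnegative orthant with `f 0 ≥ 0` satisfying the
diminishing-returns (DR-submodularity) property is subadditive. -/
theorem drSubmodular_subadditive
    {n : ℕ} (f : (Fin n → ℝ) → ℝ)
    (hf0 : 0 ≤ f 0)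
    (hDR : ∀ x y : Fin n → ℝ, 0 ≤ x → x ≤ y → ∀ i : Fin n, ∀ z : ℝ, 0 ≤ z →
      f (y + Pi.single i z) - f y ≤ f (x + Pi.single i z) - f x) :
    ∀ x y : Fin n → ℝ, 0 ≤ x → 0 ≤ y → f (x + y) ≤ f x + f y := by
  intro x y hx hy
  have hy_DR : HasDiminishingReturns f y :=
    hasDiminishingReturns_of_nonneg (fun i z hz a b ha hab => hDR a b ha hab i z hz) hy
  have h := hy_DR 0 x le_rfl hx
  rw [zero_add] at h
  linarith
end

section
/- The success-probability function f(x) = 1 − ∏_{i=1}^n (1 − x_i) is subadditive on [0,1]ⁿ: for all x, y ∈ [0,1]ⁿ such that x + y ∈ [0,1]ⁿ, f(x + y) ≤ f(x) + f(y). -/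
private lemma prod_subadd_key {ι : Type*} [DecidableEq ι] (s : Finset ι) (a b : ι → ℝ)
    (ha : ∀ i ∈ s, a i ∈ Set.Icc (0 : ℝ) 1) (hb : ∀ i ∈ s, b i ∈ Set.Icc (0 : ℝ) 1)
    (hab : ∀ i ∈ s, 1 ≤ a i + b i) :
    (∏ i ∈ s, a i) + ∏ i ∈ s, b i ≤ 1 + ∏ i ∈ s, (a i + b i - 1) := by
  classical
  induction s using Finset.induction_on with
  | empty => simp
  | @insert j s hj ih =>
    have ha' : ∀ i ∈ s, a i ∈ Set.Icc (0 : ℝ) 1 := fun i hi => ha i (Finset.mem_insert_of_mem hi)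
    have hb' : ∀ i ∈ s, b i ∈ Set.Icc (0 : ℝ) 1 := fun i hi => hb i (Finset.mem_insert_of_mem hi)
    have hab' : ∀ i ∈ s, 1 ≤ a i + b i := fun i hi => hab i (Finset.mem_insert_of_mem hi)
    have IH := ih ha' hb' hab'
    have hcA : ∏ i ∈ s, (a i + b i - 1) ≤ ∏ i ∈ s, a i := by
      apply Finset.prod_le_prod
      · intro i hi; linarith [(hab' i hi), (hb' i hi).2]
      · intro i hi; linarith [(hb' i hi).2]
    have hcB : ∏ i ∈ s, (a i + b i - 1) ≤ ∏ i ∈ s, b i := by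
      apply Finset.prod_le_prod
      · intro i hi; linarith [(hab' i hi), (hb' i hi).2]
      · intro i hi; linarith [(ha' i hi).2]
    have haj := ha j (Finset.mem_insert_self j s)
    have hbj := hb j (Finset.mem_insert_self j s)
    have habj := hab j (Finset.mem_insert_self j s)
    rw [Finset.prod_insert hj, Finset.prod_insert hj, Finset.prod_insert hj]
    nlinarith [haj.1, haj.2, hbj.1, hbj.2, hcA, hcB, IH]

/-- The success-probability function `f(x) = 1 − ∏ i, (1 − x i)` is subadditive on
`[0,1]ⁿ`: `f (x + y) ≤ f x + f y` whenever `x`, `y` and `x + y` lie in `[0,1]ⁿ`. -/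
theorem successProbability_subadditive
    {n : ℕ} (x y : Fin n → ℝ)
    (hx : ∀ i, x i ∈ Set.Icc (0 : ℝ) 1) (hy : ∀ i, y i ∈ Set.Icc (0 : ℝ) 1)
    (hxy : ∀ i, x i + y i ∈ Set.Icc (0 : ℝ) 1) :
    1 - ∏ i, (1 - (x i + y i)) ≤ (1 - ∏ i, (1 - x i)) + (1 - ∏ i, (1 - y i)) := by
  have key := prod_subadd_key Finset.univ (fun i => 1 - x i) (fun i => 1 - y i)
    (fun i _ => ⟨by show (0:ℝ) ≤ 1 - x i; linarith [(hx i).2],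
                 by show (1:ℝ) - x i ≤ 1; linarith [(hx i).1]⟩)
    (fun i _ => ⟨by show (0:ℝ) ≤ 1 - y i; linarith [(hy i).2],
                 by show (1:ℝ) - y i ≤ 1; linarith [(hy i).1]⟩)
    (fun i _ => by show (1:ℝ) ≤ (1 - x i) + (1 - y i); linarith [(hxy i).2])
  have heq : ∏ i, ((1 - x i) + (1 - y i) - 1) = ∏ i, (1 - (x i + y i)) := by
    apply Finset.prod_congr rfl; intro i _; ring
  rw [heq] at key
  linarith
end

section
/- The success-probability function f(x) = 1 − ∏_{i=1}^n (1 − x_i) is weakly homogeneous over [0,1] with tolerance 1 in the lower direction: for every θ ∈ [0,1] and every x ∈ [0,1]ⁿ, f(θ·x) ≥ θ · f(x). -/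
lemma successProb_aux {n : ℕ} (θ : ℝ) (hθ0 : 0 ≤ θ) (hθ1 : θ ≤ 1)
    (x : Fin n → ℝ) (hx : ∀ i, x i ∈ Set.Icc (0 : ℝ) 1) :
    ∏ i, (1 - θ * x i) ≤ 1 - θ + θ * ∏ i, (1 - x i) := by
  induction n with
  | zero => simp
  | succ n ih =>
    have hQ0 : (0:ℝ) ≤ ∏ i : Fin n, (1 - x i.succ) :=
      Finset.prod_nonneg fun i _ => by linarith [(hx i.succ).2]
    have hQ1 : ∏ i : Fin n, (1 - x i.succ) ≤ 1 :=
      Finset.prod_le_one (fun i _ => by linarith [(hx i.succ).2])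
        (fun i _ => by linarith [(hx i.succ).1])
    have hP0 : (0:ℝ) ≤ ∏ i : Fin n, (1 - θ * x i.succ) :=
      Finset.prod_nonneg fun i _ => by nlinarith [(hx i.succ).2, (hx i.succ).1]
    have h := ih (fun i => x i.succ) (fun i => hx i.succ)
    rw [Fin.prod_univ_succ, Fin.prod_univ_succ]
    have hx0 := hx 0
    have h1 : 1 - θ * x 0 ≥ 0 := by nlinarith [hx0.1, hx0.2]
    nlinarith [hx0.1, hx0.2, mul_le_mul_of_nonneg_left h h1, mul_nonneg hθ0 hx0.1, mul_nonneg (mul_nonneg hθ0 hx0.1) (sub_nonneg.2 hQ1)]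

/-- The success-probability function `f(x) = 1 − ∏ i, (1 − x i)` is weakly homogeneous
over `[0,1]` with tolerance `1` in the lower direction: `f (θ • x) ≥ θ · f x`. -/
theorem successProbability_weakly_homogeneous
    {n : ℕ} (θ : ℝ) (hθ : θ ∈ Set.Icc (0 : ℝ) 1)
    (x : Fin n → ℝ) (hx : ∀ i, x i ∈ Set.Icc (0 : ℝ) 1) :
    θ * (1 - ∏ i, (1 - x i)) ≤ 1 - ∏ i, (1 - θ * x i) := by
  have := successProb_aux θ hθ.1 hθ.2 x hx
  linarith
end

section
/- (Lemma 3, bounds via the tail summaries H_i) In the setup below, for every S ⊆ {1,…,n} with |S| ≤ k, the following hold: u(S) ≥ (1−ε)^{k−1} · (1 − Δ/ε) · max{ ε·Σ_{i∈S} H_i , w(S) } and u(S) ≤ 2 · max{ ε·Σ_{i∈S} H_i , w(S) }. -/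
/-!
Write `Z_i = X_i·1{X_i ≤ τ_i}`, so that `X_S = Z_S + Σ_{i ∈ S, X_i > τ_i} X_i e_i`. Subadditivity
gives `f(X_S) ≤ f(Z_S) + Σ_{i ∈ S} 1{X_i > τ_i} f(X_i e_i)`, whose expectation is
`w(S) + Σ_{i ∈ S} p_i H_i` with `p_i = ℙ(X_i > τ_i) ≤ ε`: this is the upper bound.

For the lower bound, the events `A_i = {X_i > τ_i, X_j ≤ τ_j for j ∈ S \ {i}}` are disjoint and
`f(X_S) ≥ f(X_i e_i)` on `A_i` by monotonicity. By independence
`𝔼[f(X_i e_i); A_i] = p_i H_i ∏_{j ∈ S \ {i}} ℙ(X_j ≤ τ_j) ≥ (ε - Δ) (1 - ε)^{k-1} H_i`,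
so `u(S) ≥ (1 - ε)^{k-1} (1 - Δ/ε) ε Σ_{i ∈ S} H_i`; and `u(S) ≥ w(S)` by monotonicity.
-/

open MeasureTheory ProbabilityTheory

/-- For a subset `S` of coordinates, `mask S x` is the vector agreeing with `x` on `S`
and equal to `0` outside `S`. -/
def mask {n : ℕ} (S : Finset (Fin n)) (x : Fin n → ℝ) : Fin n → ℝ :=
  fun i => if i ∈ S then x i else 0

theorem apply_add_sum_le_add_sum_apply {ι E F : Type*} [AddCommMonoid E] [PartialOrder E]
    [IsOrderedAddMonoid E] [AddCommMonoid F] [PartialOrder F] [IsOrderedAddMonoid F]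
    {g : E → F} (hg : ∀ x y, 0 ≤ x → 0 ≤ y → g (x + y) ≤ g x + g y)
    (s : Finset ι) {v : E} (hv : 0 ≤ v) {a : ι → E} (ha : ∀ i ∈ s, 0 ≤ a i) :
    g (v + ∑ i ∈ s, a i) ≤ g v + ∑ i ∈ s, g (a i) := by
  classical
  induction s using Finset.induction_on with
  | empty => simp
  | insert j s hj ih =>
    rw [Finset.sum_insert hj, Finset.sum_insert hj, add_left_comm, add_left_comm (g v)]
    calc g (a j + (v + ∑ i ∈ s, a i))
        ≤ g (a j) + g (v + ∑ i ∈ s, a i) :=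
          hg _ _ (ha j (s.mem_insert_self j))
            (add_nonneg hv (Finset.sum_nonneg fun i hi => ha i (Finset.mem_insert_of_mem hi)))
      _ ≤ g (a j) + (g v + ∑ i ∈ s, g (a i)) :=
          add_le_add_right (ih fun i hi => ha i (Finset.mem_insert_of_mem hi)) _

theorem pow_le_prod_erase {ι : Type*} [DecidableEq ι] {S : Finset ι} {k : ℕ} (hS : S.card ≤ k)
    {i : ι} (hi : i ∈ S) {a : ℝ} (ha0 : 0 ≤ a) (ha1 : a ≤ 1) {q : ι → ℝ}
    (hq : ∀ j ∈ S, a ≤ q j) : a ^ (k - 1) ≤ ∏ j ∈ S.erase i, q j :=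
  calc a ^ (k - 1)
      ≤ a ^ (S.erase i).card :=
        pow_le_pow_of_le_one ha0 ha1 (by rw [Finset.card_erase_of_mem hi]; omega)
    _ = ∏ j ∈ S.erase i, a := (Finset.prod_const _).symm
    _ ≤ ∏ j ∈ S.erase i, q j :=
        Finset.prod_le_prod (fun _ _ => ha0) fun j hj => hq j (Finset.mem_of_mem_erase hj)

theorem mul_mul_sum_le_sum_mul_mul {ι : Type*} {S : Finset ι} {H p P : ι → ℝ} {a b : ℝ}
    (ha : 0 ≤ a) (hb : 0 ≤ b) (hH : ∀ i ∈ S, 0 ≤ H i) (hp : ∀ i ∈ S, b ≤ p i)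
    (hP : ∀ i ∈ S, a ≤ P i) :
    a * b * ∑ i ∈ S, H i ≤ ∑ i ∈ S, H i * p i * P i := by
  rw [Finset.mul_sum]
  refine Finset.sum_le_sum fun i hi => ?_
  calc a * b * H i
      = H i * (b * a) := by ring
    _ ≤ H i * (p i * P i) := mul_le_mul_of_nonneg_left
        (mul_le_mul (hp i hi) (hP i hi) ha (hb.trans (hp i hi))) (hH i hi)
    _ = H i * p i * P i := (mul_assoc _ _ _).symm

theorem mul_max_le_of_le_one {c a w u : ℝ} (hc0 : 0 ≤ c) (hc1 : c ≤ 1) (ha : c * a ≤ u)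
    (hw0 : 0 ≤ w) (hwu : w ≤ u) : c * max a w ≤ u := by
  rw [mul_max_of_nonneg _ _ hc0]
  exact max_le ha ((mul_le_of_le_one_left hw0 hc1).trans hwu)

theorem tail_summary_bounds_of_decomposition {ι : Type*} [DecidableEq ι] {S : Finset ι} {k : ℕ}
    (hS : S.card ≤ k) {ε Δ u w : ℝ} {H p q : ι → ℝ} (hε : ε ∈ Set.Ioo (0 : ℝ) 1)
    (hΔ : Δ ∈ Set.Ico (0 : ℝ) ε) (hH : ∀ i, 0 ≤ H i) (hp : ∀ i, ε - Δ ≤ p i ∧ p i ≤ ε)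
    (hq : ∀ i, 1 - ε ≤ q i) (hw : 0 ≤ w) (hwu : w ≤ u) (hupper : u ≤ w + ∑ i ∈ S, H i * p i)
    (hlower : ∑ i ∈ S, H i * p i * ∏ j ∈ S.erase i, q j ≤ u) :
    (1 - ε) ^ (k - 1) * (1 - Δ / ε) * max (ε * ∑ i ∈ S, H i) w ≤ u ∧
      u ≤ 2 * max (ε * ∑ i ∈ S, H i) w := by
  obtain ⟨hε0, hε1⟩ := hε
  obtain ⟨hΔ0, hΔε⟩ := hΔ
  have hΔε' : Δ / ε ≤ 1 := (div_le_one hε0).2 hΔε.le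
  have hc0 : 0 ≤ (1 - ε) ^ (k - 1) * (1 - Δ / ε) :=
    mul_nonneg (pow_nonneg (by linarith) _) (by linarith)
  have hc1 : (1 - ε) ^ (k - 1) * (1 - Δ / ε) ≤ 1 :=
    mul_le_one₀ (pow_le_one₀ (by linarith) (by linarith)) (by linarith)
      (by linarith [div_nonneg hΔ0 hε0.le])
  refine ⟨mul_max_le_of_le_one hc0 hc1 ?_ hw hwu, ?_⟩
  · have hc : (1 - ε) ^ (k - 1) * (1 - Δ / ε) * ε = (1 - ε) ^ (k - 1) * (ε - Δ) := by
      field_simp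
    rw [← mul_assoc, hc]
    refine le_trans ?_ hlower
    exact mul_mul_sum_le_sum_mul_mul (pow_nonneg (by linarith) _) (by linarith)
      (fun i _ => hH i) (fun i _ => (hp i).1)
      fun i hi => pow_le_prod_erase hS hi (by linarith) (by linarith) fun j _ => hq j
  · have hsum : ∑ i ∈ S, H i * p i ≤ ε * ∑ i ∈ S, H i := by
      rw [Finset.mul_sum]
      exact Finset.sum_le_sum fun i _ => by
        rw [mul_comm ε]
        exact mul_le_mul_of_nonneg_left (hp i).2 (hH i)
    linarith [le_max_left (ε * ∑ i ∈ S, H i) w, le_max_right (ε * ∑ i ∈ S, H i) w]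

noncomputable section Coordinates

variable {n : ℕ}

def truncAt (τ x : Fin n → ℝ) : Fin n → ℝ :=
  fun i => if x i ≤ τ i then x i else 0

def tailTerm (f : (Fin n → ℝ) → ℝ) (τ : Fin n → ℝ) (i : Fin n) : ℝ → ℝ :=
  (Set.Ioi (τ i)).indicator fun r => f (Pi.single i r)

variable {S : Finset (Fin n)} {τ x y : Fin n → ℝ}

theorem mask_nonneg (hx : 0 ≤ x) : 0 ≤ mask S x := fun i => by
  unfold mask; split_ifs
  exacts [hx i, le_rfl]

theorem mask_mono (hxy : x ≤ y) : mask S x ≤ mask S y := fun i => by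
  unfold mask; split_ifs
  exacts [hxy i, le_rfl]

theorem truncAt_nonneg (hx : 0 ≤ x) : 0 ≤ truncAt τ x := fun i => by
  unfold truncAt; split_ifs
  exacts [hx i, le_rfl]

theorem truncAt_le (hx : 0 ≤ x) : truncAt τ x ≤ x := fun i => by
  unfold truncAt; split_ifs
  exacts [le_rfl, hx i]

theorem single_le_mask (hx : 0 ≤ x) {i : Fin n} (hi : i ∈ S) : Pi.single i (x i) ≤ mask S x := by
  intro j
  rcases eq_or_ne j i with rfl | hji
  · simp [mask, hi]
  · simpa [hji] using mask_nonneg hx j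

theorem mask_eq_mask_truncAt_add_sum :
    mask S x = mask S (truncAt τ x) + ∑ i ∈ S with τ i < x i, Pi.single i (x i) := by
  funext j
  simp only [mask, truncAt, Pi.add_apply, Finset.sum_apply, Pi.single_apply,
    Finset.sum_ite_eq, Finset.mem_filter]
  split_ifs <;> grind

variable {f : (Fin n → ℝ) → ℝ}

theorem apply_mask_le_add_sum_tailTerm
    (hf_subadd : ∀ x y : Fin n → ℝ, 0 ≤ x → 0 ≤ y → f (x + y) ≤ f x + f y) (hx : 0 ≤ x) :
    f (mask S x) ≤ f (mask S (truncAt τ x)) + ∑ i ∈ S, tailTerm f τ i (x i) := by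
  calc f (mask S x)
      = f (mask S (truncAt τ x) + ∑ i ∈ S with τ i < x i, Pi.single i (x i)) := by
        rw [← mask_eq_mask_truncAt_add_sum]
    _ ≤ f (mask S (truncAt τ x)) + ∑ i ∈ S with τ i < x i, f (Pi.single i (x i)) :=
        apply_add_sum_le_add_sum_apply hf_subadd _ (mask_nonneg (truncAt_nonneg hx))
          fun i _ => Pi.single_nonneg.2 (hx i)
    _ = f (mask S (truncAt τ x)) + ∑ i ∈ S, tailTerm f τ i (x i) := by
        simp [Finset.sum_filter, tailTerm, Set.indicator_apply]

theorem sum_tailTerm_mul_prod_le_apply_mask (hf_nonneg : ∀ x : Fin n → ℝ, 0 ≤ x → 0 ≤ f x)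
    (hf_mono : ∀ x y : Fin n → ℝ, 0 ≤ x → x ≤ y → f x ≤ f y) (hx : 0 ≤ x) :
    ∑ i ∈ S, tailTerm f τ i (x i) * ∏ j ∈ S.erase i, (Set.Iic (τ j)).indicator 1 (x j) ≤
      f (mask S x) := by
  by_cases h : ∃ i ∈ S, τ i < x i ∧ ∀ j ∈ S.erase i, x j ≤ τ j
  · obtain ⟨i, hiS, hi, hrest⟩ := h
    rw [Finset.sum_eq_single_of_mem i hiS fun j hjS hji => ?_]
    · rw [Finset.prod_eq_one fun j hj => Set.indicator_of_mem (Set.mem_Iic.2 (hrest j hj)) _,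
        mul_one]
      simpa [tailTerm, hi] using
        hf_mono _ _ (Pi.single_nonneg.2 (hx i)) (single_le_mask hx hiS)
    · refine mul_eq_zero_of_right _ (Finset.prod_eq_zero (Finset.mem_erase.2 ⟨hji.symm, hiS⟩) ?_)
      simpa using hi
  · push Not at h
    rw [Finset.sum_eq_zero fun i hiS => ?_]
    · exact hf_nonneg _ (mask_nonneg hx)
    by_cases hi : τ i < x i
    · obtain ⟨j, hj, hjτ⟩ := h i hiS hi
      exact mul_eq_zero_of_right _ (Finset.prod_eq_zero hj (by simpa using hjτ))
    · simp [tailTerm, hi]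

end Coordinates

section Independence

variable {Ω ι : Type*} [MeasurableSpace Ω] {μ : Measure Ω} [IsProbabilityMeasure μ]

theorem integral_finset_prod_eq_prod_integral_of_iIndepFun {Y : ι → Ω → ℝ}
    (hY : iIndepFun Y μ) (hYm : ∀ i, Measurable (Y i)) (s : Finset ι) :
    ∫ ω, ∏ i ∈ s, Y i ω ∂μ = ∏ i ∈ s, ∫ ω, Y i ω ∂μ := by
  classical
  induction s using Finset.induction_on with
  | empty => simp
  | insert j s hj ih =>
    simp only [Finset.prod_insert hj, ← ih, ← Finset.prod_apply]
    exact (hY.indepFun_finsetProd_of_notMem hYm hj).symm.integral_fun_mul_eq_mul_integral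
      (hYm j).aestronglyMeasurable
      (by fun_prop : Measurable (∏ i ∈ s, Y i)).aestronglyMeasurable

theorem integral_comp_mul_prod_indicator_of_iIndepFun {β : Type*} [MeasurableSpace β]
    {X : ι → Ω → β} (hX : iIndepFun X μ) (hXm : ∀ i, Measurable (X i)) {g : β → ℝ}
    (hg : Measurable g) {s : ι → Set β} (hs : ∀ j, MeasurableSet (s j)) {i : ι} {T : Finset ι}
    (hi : i ∉ T) :
    ∫ ω, g (X i ω) * ∏ j ∈ T, (s j).indicator 1 (X j ω) ∂μ =
      (∫ ω, g (X i ω) ∂μ) * ∏ j ∈ T, μ.real (X j ⁻¹' s j) := by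
  classical
  set φ : ι → β → ℝ := Function.update (fun j => (s j).indicator 1) i g
  have hφT : ∀ j ∈ T, φ j = (s j).indicator 1 := fun j hj =>
    Function.update_of_ne (ne_of_mem_of_not_mem hj hi) _ _
  have hφm : ∀ j, Measurable (φ j) := by
    intro j
    rcases eq_or_ne j i with rfl | hji
    · simpa [φ] using hg
    · simpa [φ, hji] using measurable_one.indicator (hs j)
  have hind : ∀ j, ∫ ω, (s j).indicator 1 (X j ω) ∂μ = μ.real (X j ⁻¹' s j) := fun j =>
    integral_indicator_one (hXm j (hs j))
  have hprod : ∀ ω, ∏ j ∈ T, φ j (X j ω) = ∏ j ∈ T, (s j).indicator 1 (X j ω) := fun ω =>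
    Finset.prod_congr rfl fun j hj => by rw [hφT j hj]
  calc ∫ ω, g (X i ω) * ∏ j ∈ T, (s j).indicator 1 (X j ω) ∂μ
      = ∫ ω, ∏ j ∈ insert i T, φ j (X j ω) ∂μ := by
        simp only [Finset.prod_insert hi, hprod]
        simp [φ]
    _ = ∏ j ∈ insert i T, ∫ ω, φ j (X j ω) ∂μ :=
        integral_finset_prod_eq_prod_integral_of_iIndepFun (hX.comp φ hφm)
          (fun j => (hφm j).comp (hXm j)) (insert i T)
    _ = (∫ ω, g (X i ω) ∂μ) * ∏ j ∈ T, μ.real (X j ⁻¹' s j) := by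
        rw [Finset.prod_insert hi, Finset.prod_congr rfl fun j hj => by rw [hφT j hj, hind]]
        simp [φ]

end Independence

section RandomVector

variable {Ω : Type*} {n : ℕ} {X : Fin n → Ω → ℝ} {f : (Fin n → ℝ) → ℝ} {τ : Fin n → ℝ}

theorem tailTerm_comp {i : Fin n} :
    (fun ω => tailTerm f τ i (X i ω)) =
      {ω | τ i < X i ω}.indicator fun ω => f (Pi.single i (X i ω)) := by
  funext ω
  simp [tailTerm, Set.indicator_apply]

variable [MeasurableSpace Ω] {μ : Measure Ω} {S : Finset (Fin n)}

theorem integrable_tailTerm_comp {i : Fin n} (hXm : Measurable (X i))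
    (hint : Integrable (fun ω => f (Pi.single i (X i ω))) μ) :
    Integrable (fun ω => tailTerm f τ i (X i ω)) μ := by
  rw [tailTerm_comp]
  exact hint.indicator (measurableSet_lt measurable_const hXm)

theorem integral_tailTerm_comp {i : Fin n} (hXm : Measurable (X i)) :
    ∫ ω, tailTerm f τ i (X i ω) ∂μ = ∫ ω in {ω | τ i < X i ω}, f (Pi.single i (X i ω)) ∂μ := by
  rw [tailTerm_comp, integral_indicator (measurableSet_lt measurable_const hXm)]

theorem toReal_measure_lt_eq_one_sub [IsProbabilityMeasure μ] {Y : Ω → ℝ} (hY : Measurable Y)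
    (t : ℝ) : (μ {ω | t < Y ω}).toReal = 1 - (μ {ω | Y ω ≤ t}).toReal := by
  have hc : {ω | t < Y ω} = {ω | Y ω ≤ t}ᶜ := by ext; simp
  rw [hc]
  exact probReal_compl_eq_one_sub (measurableSet_le hY measurable_const)

theorem integral_mask_truncAt_nonneg (hX_nonneg : ∀ i ω, 0 ≤ X i ω)
    (hf_nonneg : ∀ x : Fin n → ℝ, 0 ≤ x → 0 ≤ f x) :
    0 ≤ ∫ ω, f (mask S (truncAt τ (X · ω))) ∂μ :=
  integral_nonneg fun ω => hf_nonneg _ (mask_nonneg (truncAt_nonneg fun i => hX_nonneg i ω))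

theorem integral_mask_truncAt_le (hX_nonneg : ∀ i ω, 0 ≤ X i ω)
    (hf_mono : ∀ x y : Fin n → ℝ, 0 ≤ x → x ≤ y → f x ≤ f y)
    (hu_int : Integrable (fun ω => f (mask S (X · ω))) μ)
    (hw_int : Integrable (fun ω => f (mask S (truncAt τ (X · ω)))) μ) :
    ∫ ω, f (mask S (truncAt τ (X · ω))) ∂μ ≤ ∫ ω, f (mask S (X · ω)) ∂μ :=
  integral_mono hw_int hu_int fun ω =>
    hf_mono _ _ (mask_nonneg (truncAt_nonneg fun i => hX_nonneg i ω))
      (mask_mono (truncAt_le fun i => hX_nonneg i ω))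

theorem integral_mask_le_add_sum_integral_tailTerm (hXm : ∀ i, Measurable (X i))
    (hX_nonneg : ∀ i ω, 0 ≤ X i ω)
    (hf_subadd : ∀ x y : Fin n → ℝ, 0 ≤ x → 0 ≤ y → f (x + y) ≤ f x + f y)
    (hint : ∀ i, Integrable (fun ω => f (Pi.single i (X i ω))) μ)
    (hu_int : Integrable (fun ω => f (mask S (X · ω))) μ)
    (hw_int : Integrable (fun ω => f (mask S (truncAt τ (X · ω)))) μ) :
    ∫ ω, f (mask S (X · ω)) ∂μ ≤
      ∫ ω, f (mask S (truncAt τ (X · ω))) ∂μ + ∑ i ∈ S, ∫ ω, tailTerm f τ i (X i ω) ∂μ := by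
  have htail : ∀ i ∈ S, Integrable (fun ω => tailTerm f τ i (X i ω)) μ := fun i _ =>
    integrable_tailTerm_comp (hXm i) (hint i)
  rw [← integral_finsetSum S htail, ← integral_add hw_int (integrable_finsetSum S htail)]
  exact integral_mono hu_int (hw_int.add (integrable_finsetSum S htail)) fun ω =>
    apply_mask_le_add_sum_tailTerm hf_subadd fun i => hX_nonneg i ω

theorem sum_integral_tailTerm_mul_prod_le_integral_mask [IsProbabilityMeasure μ]
    (hX : iIndepFun X μ) (hXm : ∀ i, Measurable (X i)) (hX_nonneg : ∀ i ω, 0 ≤ X i ω)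
    (hf_meas : Measurable f) (hf_nonneg : ∀ x : Fin n → ℝ, 0 ≤ x → 0 ≤ f x)
    (hf_mono : ∀ x y : Fin n → ℝ, 0 ≤ x → x ≤ y → f x ≤ f y)
    (hint : ∀ i, Integrable (fun ω => f (Pi.single i (X i ω))) μ)
    (hu_int : Integrable (fun ω => f (mask S (X · ω))) μ) :
    ∑ i ∈ S, (∫ ω, tailTerm f τ i (X i ω) ∂μ) * ∏ j ∈ S.erase i, μ.real {ω | X j ω ≤ τ j} ≤
      ∫ ω, f (mask S (X · ω)) ∂μ := by
  have hmeas : ∀ i, Measurable (tailTerm f τ i) := fun i =>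
    (hf_meas.comp ((continuous_single i).measurable)).indicator measurableSet_Ioi
  have hint_term : ∀ i ∈ S, Integrable (fun ω => tailTerm f τ i (X i ω) *
      ∏ j ∈ S.erase i, (Set.Iic (τ j)).indicator 1 (X j ω)) μ := by
    intro i _
    refine (integrable_tailTerm_comp (hXm i) (hint i)).mul_bdd (c := 1) ?_ (ae_of_all _ fun ω => ?_)
    · exact (Finset.measurable_prod _ fun j _ =>
        (measurable_one.indicator measurableSet_Iic).comp (hXm j)).aestronglyMeasurable
    · rw [norm_prod]
      exact Finset.prod_le_one (fun _ _ => norm_nonneg _) fun j _ =>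
        (norm_indicator_le_norm_self _ _).trans norm_one.le
  calc ∑ i ∈ S, (∫ ω, tailTerm f τ i (X i ω) ∂μ) * ∏ j ∈ S.erase i, μ.real {ω | X j ω ≤ τ j}
      = ∑ i ∈ S, ∫ ω, tailTerm f τ i (X i ω) *
          ∏ j ∈ S.erase i, (Set.Iic (τ j)).indicator 1 (X j ω) ∂μ :=
        Finset.sum_congr rfl fun i _ => (integral_comp_mul_prod_indicator_of_iIndepFun hX hXm
          (hmeas i) (fun j => measurableSet_Iic) (Finset.notMem_erase i S)).symm
    _ = ∫ ω, ∑ i ∈ S, tailTerm f τ i (X i ω) *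
          ∏ j ∈ S.erase i, (Set.Iic (τ j)).indicator 1 (X j ω) ∂μ :=
        (integral_finsetSum S hint_term).symm
    _ ≤ ∫ ω, f (mask S (X · ω)) ∂μ :=
        integral_mono (integrable_finsetSum S hint_term) hu_int fun ω =>
          sum_tailTerm_mul_prod_le_apply_mask hf_nonneg hf_mono fun i => hX_nonneg i ω

end RandomVector

theorem tail_summary_bounds_general
    {Ωs : Type*} [MeasurableSpace Ωs] (μ : Measure Ωs) [IsProbabilityMeasure μ]
    {n : ℕ}
    (X : Fin n → Ωs → ℝ)
    (hX_meas : ∀ i, Measurable (X i))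
    (hX_nonneg : ∀ i ω, 0 ≤ X i ω)
    (hX_indep : iIndepFun X μ)
    (f : (Fin n → ℝ) → ℝ)
    (hf_meas : Measurable f)
    (hf_nonneg : ∀ x : Fin n → ℝ, 0 ≤ x → 0 ≤ f x)
    (hf_mono : ∀ x y : Fin n → ℝ, 0 ≤ x → x ≤ y → f x ≤ f y)
    (hf_subadd : ∀ x y : Fin n → ℝ, 0 ≤ x → 0 ≤ y → f (x + y) ≤ f x + f y)
    (k : ℕ)
    (ε Δ : ℝ) (hε : ε ∈ Set.Ioo (0 : ℝ) 1) (hΔ : Δ ∈ Set.Ico (0 : ℝ) ε)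
    (τ : Fin n → ℝ)
    (hquant : ∀ i, 1 - ε ≤ (μ {ω | X i ω ≤ τ i}).toReal ∧
      (μ {ω | X i ω ≤ τ i}).toReal ≤ 1 - ε + Δ)
    (H : Fin n → ℝ)
    (hH : ∀ i, H i = (∫ ω in {ω | τ i < X i ω}, f (Pi.single i (X i ω)) ∂μ) /
      (μ {ω | τ i < X i ω}).toReal)
    (hH_int : ∀ i, Integrable (fun ω => f (Pi.single i (X i ω))) μ)
    (u w : Finset (Fin n) → ℝ)
    (hu : ∀ S, u S = ∫ ω, f (mask S (fun i => X i ω)) ∂μ)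
    (hw : ∀ S, w S =
      ∫ ω, f (mask S (fun i => if X i ω ≤ τ i then X i ω else 0)) ∂μ)
    (hu_int : ∀ S : Finset (Fin n),
      Integrable (fun ω => f (mask S (fun i => X i ω))) μ)
    (hw_int : ∀ S : Finset (Fin n),
      Integrable (fun ω => f (mask S (fun i => if X i ω ≤ τ i then X i ω else 0))) μ) :
    ∀ S : Finset (Fin n), S.card ≤ k →
      (1 - ε) ^ (k - 1) * (1 - Δ / ε) * max (ε * ∑ i ∈ S, H i) (w S) ≤ u S ∧
      u S ≤ 2 * max (ε * ∑ i ∈ S, H i) (w S) := by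
  intro S hS
  set p : Fin n → ℝ := fun i => (μ {ω | τ i < X i ω}).toReal
  have hp : ∀ i, ε - Δ ≤ p i ∧ p i ≤ ε := fun i => by
    have := hquant i
    simp only [p, toReal_measure_lt_eq_one_sub (hX_meas i)]
    constructor <;> linarith
  have hT : ∀ i, ∫ ω, tailTerm f τ i (X i ω) ∂μ = H i * p i := fun i => by
    rw [integral_tailTerm_comp (hX_meas i), hH i, div_mul_cancel₀]
    linarith [hp i, hΔ.2]
  have hH_nonneg : ∀ i, 0 ≤ H i := fun i => by
    rw [hH i]
    exact div_nonneg (setIntegral_nonneg (measurableSet_lt measurable_const (hX_meas i))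
      fun ω _ => hf_nonneg _ (Pi.single_nonneg.2 (hX_nonneg i ω))) ENNReal.toReal_nonneg
  have hupper : u S ≤ w S + ∑ i ∈ S, H i * p i := by
    have h := integral_mask_le_add_sum_integral_tailTerm (τ := τ) hX_meas hX_nonneg hf_subadd
      hH_int (hu_int S) (hw_int S)
    simp only [hT] at h
    rwa [hu S, hw S]
  have hlower : ∑ i ∈ S, H i * p i * ∏ j ∈ S.erase i, (μ {ω | X j ω ≤ τ j}).toReal ≤ u S := by
    have h := sum_integral_tailTerm_mul_prod_le_integral_mask (τ := τ) hX_indep hX_meas hX_nonneg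
      hf_meas hf_nonneg hf_mono hH_int (hu_int S)
    simp only [hT] at h
    rwa [hu S]
  have hwu : w S ≤ u S := by
    rw [hu S, hw S]
    exact integral_mask_truncAt_le hX_nonneg hf_mono (hu_int S) (hw_int S)
  have hw_nonneg : 0 ≤ w S := by
    rw [hw S]
    exact integral_mask_truncAt_nonneg hX_nonneg hf_nonneg
  exact tail_summary_bounds_of_decomposition hS hε hΔ hH_nonneg hp (fun j => (hquant j).1)
    hw_nonneg hwu hupper hlower

/-- Lemma 3: with tail summaries `H i = E[f(X_i e_i) | X_i > τ_i]` and
`w(S) = E[f(Z_S)]` for `Z_i = X_i·1{X_i ≤ τ_i}`, for every `S` with `|S| ≤ k`: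
`u(S) ≥ (1−ε)^{k−1}(1−Δ/ε)·max{ε·Σ_{i∈S} H_i, w(S)}` and
`u(S) ≤ 2·max{ε·Σ_{i∈S} H_i, w(S)}`. -/
theorem tail_summary_bounds
    {Ωs : Type*} [MeasurableSpace Ωs] (μ : Measure Ωs) [IsProbabilityMeasure μ]
    {n : ℕ} (hn : 1 ≤ n)
    (X : Fin n → Ωs → ℝ)
    (hX_meas : ∀ i, Measurable (X i))
    (hX_nonneg : ∀ i ω, 0 ≤ X i ω)
    (hX_indep : iIndepFun X μ)
    (f : (Fin n → ℝ) → ℝ)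
    (hf_meas : Measurable f)
    (hf_nonneg : ∀ x : Fin n → ℝ, 0 ≤ x → 0 ≤ f x)
    (hf_mono : ∀ x y : Fin n → ℝ, 0 ≤ x → x ≤ y → f x ≤ f y)
    (hf_subadd : ∀ x y : Fin n → ℝ, 0 ≤ x → 0 ≤ y → f (x + y) ≤ f x + f y)
    (k : ℕ) (hk : 1 ≤ k)
    (ε Δ : ℝ) (hε : ε ∈ Set.Ioo (0 : ℝ) 1) (hΔ : Δ ∈ Set.Ico (0 : ℝ) ε)
    (τ : Fin n → ℝ) (hτ : ∀ i, 0 ≤ τ i)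
    (hquant : ∀ i, 1 - ε ≤ (μ {ω | X i ω ≤ τ i}).toReal ∧
      (μ {ω | X i ω ≤ τ i}).toReal ≤ 1 - ε + Δ)
    (H : Fin n → ℝ)
    (hH : ∀ i, H i = (∫ ω in {ω | τ i < X i ω}, f (Pi.single i (X i ω)) ∂μ) /
      (μ {ω | τ i < X i ω}).toReal)
    (hH_int : ∀ i, Integrable (fun ω => f (Pi.single i (X i ω))) μ)
    (u w : Finset (Fin n) → ℝ)
    (hu : ∀ S, u S = ∫ ω, f (mask S (fun i => X i ω)) ∂μ)
    (hw : ∀ S, w S =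
      ∫ ω, f (mask S (fun i => if X i ω ≤ τ i then X i ω else 0)) ∂μ)
    (hu_int : ∀ S : Finset (Fin n),
      Integrable (fun ω => f (mask S (fun i => X i ω))) μ)
    (hw_int : ∀ S : Finset (Fin n),
      Integrable (fun ω => f (mask S (fun i => if X i ω ≤ τ i then X i ω else 0))) μ) :
    ∀ S : Finset (Fin n), S.card ≤ k →
      (1 - ε) ^ (k - 1) * (1 - Δ / ε) * max (ε * ∑ i ∈ S, H i) (w S) ≤ u S ∧
      u S ≤ 2 * max (ε * ∑ i ∈ S, H i) (w S) :=
  tail_summary_bounds_general μ X hX_meas hX_nonneg hX_indep f hf_meas hf_nonneg hf_mono hf_subadd k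
    ε Δ hε hΔ τ hquant H hH hH_int u w hu hw hu_int hw_int
end
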